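/- For every natural number n ≥ 1, the integral over [-1,1] of ((T_n(x) - T_n(0))/x)^2 · (1-x^2)^{-1/2} dx equals π·n, where T_k denotes the k-th Chebyshev polynomial of the first kind. -/
import Mathlib


open MeasureTheory Real

/-- The Chebyshev polynomials of the first kind, defined by
`T_{n+1}(x) = 2x T_n(x) - T_{n-1}(x)` with `T_0 = 1`, `T_1 = x`. -/
noncomputable def chebT : ℕ → ℝ → ℝ
  | 0, _ => 1
  | 1, x => x
  | n + 2, x => 2 * x * chebT (n + 1) x - chebT n x

/-- Auxiliary polynomials: `chebQ n x = (chebT n x - chebT n 0) / x`. -/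
noncomputable def chebQ : ℕ → ℝ → ℝ
  | 0, _ => 0
  | 1, _ => 1
  | n + 2, x => 2 * chebT (n + 1) x - chebQ n x

lemma chebT_cos : ∀ (n : ℕ) (θ : ℝ), chebT n (Real.cos θ) = Real.cos (n * θ)
  | 0, θ => by simp [chebT]
  | 1, θ => by simp [chebT]
  | n + 2, θ => by
    simp only [chebT, chebT_cos (n+1) θ, chebT_cos n θ]
    push_cast
    rw [show ((n:ℝ)+2) * θ = ((n:ℝ)+1) * θ + θ by ring, Real.cos_add,
      show (n:ℝ) * θ = ((n:ℝ)+1) * θ - θ by ring, Real.cos_sub]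
    ring

lemma chebT_sub_factor : ∀ (n : ℕ) (x : ℝ), chebT n x - chebT n 0 = x * chebQ n x
  | 0, x => by simp [chebT, chebQ]
  | 1, x => by simp [chebT, chebQ]
  | n + 2, x => by
    have h := chebT_sub_factor n x
    simp only [chebT, chebQ]
    linear_combination -h

lemma chebT_cont : ∀ n, Continuous (fun x => chebT n x)
  | 0 => by simp only [chebT]; exact continuous_const
  | 1 => by simp only [chebT]; exact continuous_id
  | n + 2 => by
    simp only [chebT]
    exact ((continuous_const.mul continuous_id).mul (chebT_cont (n+1))).sub (chebT_cont n)

lemma chebQ_cont : ∀ n, Continuous (fun x => chebQ n x)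
  | 0 => by simp only [chebQ]; exact continuous_const
  | 1 => by simp only [chebQ]; exact continuous_const
  | n + 2 => by
    simp only [chebQ]
    exact (continuous_const.mul (chebT_cont (n+1))).sub (chebQ_cont n)

lemma integral_cos_int_mul (k : ℤ) (hk : k ≠ 0) :
    ∫ θ in (0:ℝ)..π, Real.cos (k * θ) = 0 := by
  have hk' : (k:ℝ) ≠ 0 := Int.cast_ne_zero.mpr hk
  rw [intervalIntegral.integral_comp_mul_left Real.cos hk']
  simp [Real.sin_int_mul_pi]

lemma cos_mul_cos_eq (a b : ℕ) (θ : ℝ) :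
    Real.cos (a * θ) * Real.cos (b * θ)
      = (Real.cos ((((a:ℤ) + b) : ℤ) * θ) + Real.cos ((((a:ℤ) - b) : ℤ) * θ)) / 2 := by
  push_cast
  rw [show ((a:ℝ) + b) * θ = a * θ + b * θ by ring, Real.cos_add,
    show ((a:ℝ) - b) * θ = a * θ - b * θ by ring, Real.cos_sub]
  ring

lemma integral_cos_nat_mul_cos (a b : ℕ) (ha : a ≠ 0) (hb : b ≠ 0) :
    ∫ θ in (0:ℝ)..π, Real.cos (a * θ) * Real.cos (b * θ)
      = if a = b then π / 2 else 0 := by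
  rw [intervalIntegral.integral_congr (fun θ _ => cos_mul_cos_eq a b θ)]
  have h1 : IntervalIntegrable (fun θ => Real.cos ((((a:ℤ)+b):ℤ) * θ)) volume 0 π :=
    (Real.continuous_cos.comp (continuous_const.mul continuous_id)).intervalIntegrable _ _
  have h2 : IntervalIntegrable (fun θ => Real.cos ((((a:ℤ)-b):ℤ) * θ)) volume 0 π :=
    (Real.continuous_cos.comp (continuous_const.mul continuous_id)).intervalIntegrable _ _
  rw [intervalIntegral.integral_div, intervalIntegral.integral_add h1 h2]
  rw [integral_cos_int_mul ((a:ℤ)+b) (by omega)]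
  by_cases hab : a = b
  · subst hab
    simp
  · rw [integral_cos_int_mul ((a:ℤ)-b) (by omega), if_neg hab]
    norm_num

lemma integral_cos_mul_chebQ : ∀ (n m : ℕ), n ≤ m →
    ∫ θ in (0:ℝ)..π, Real.cos (m * θ) * chebQ n (Real.cos θ) = 0
  | 0, m, _ => by simp [chebQ]
  | 1, m, h => by
    simp only [chebQ, mul_one]
    have := integral_cos_int_mul (m:ℤ) (by exact_mod_cast Nat.one_le_iff_ne_zero.mp h)
    simpa using this
  | n + 2, m, h => by
    have e : ∀ θ ∈ Set.uIcc (0:ℝ) π, Real.cos (m * θ) * chebQ (n+2) (Real.cos θ)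
        = 2 * (Real.cos (m * θ) * Real.cos ((n+1 : ℕ) * θ))
          - Real.cos (m * θ) * chebQ n (Real.cos θ) := by
      intro θ _
      simp only [chebQ, chebT_cos]
      push_cast
      ring
    rw [intervalIntegral.integral_congr e]
    have hc1 : IntervalIntegrable
        (fun θ => 2 * (Real.cos (m * θ) * Real.cos ((n+1 : ℕ) * θ))) volume 0 π := by
      apply Continuous.intervalIntegrable
      continuity
    have hc2 : IntervalIntegrable (fun θ => Real.cos (m * θ) * chebQ n (Real.cos θ)) volume 0 π := by
      apply Continuous.intervalIntegrable
      exact (Real.continuous_cos.comp (continuous_const.mul continuous_id)).mul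
        ((chebQ_cont n).comp Real.continuous_cos)
    rw [intervalIntegral.integral_sub hc1 hc2, intervalIntegral.integral_const_mul,
      integral_cos_nat_mul_cos m (n+1) (by omega) (by omega), if_neg (by omega),
      integral_cos_mul_chebQ n m (by omega)]
    ring

lemma integral_chebQ_sq : ∀ (n : ℕ),
    ∫ θ in (0:ℝ)..π, (chebQ n (Real.cos θ)) ^ 2 = π * n
  | 0 => by simp [chebQ]
  | 1 => by simp [chebQ]
  | n + 2 => by
    have e : ∀ θ ∈ Set.uIcc (0:ℝ) π, (chebQ (n+2) (Real.cos θ)) ^ 2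
        = 4 * (Real.cos ((n+1 : ℕ) * θ) * Real.cos ((n+1 : ℕ) * θ))
          - 4 * (Real.cos ((n+1 : ℕ) * θ) * chebQ n (Real.cos θ))
          + (chebQ n (Real.cos θ)) ^ 2 := by
      intro θ _
      simp only [chebQ, chebT_cos]
      push_cast
      ring
    rw [intervalIntegral.integral_congr e]
    have c1 : Continuous (fun θ : ℝ => Real.cos ((n+1 : ℕ) * θ)) :=
      Real.continuous_cos.comp (continuous_const.mul continuous_id)
    have cq : Continuous (fun θ : ℝ => chebQ n (Real.cos θ)) :=
      (chebQ_cont n).comp Real.continuous_cos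
    have h1 : IntervalIntegrable
        (fun θ : ℝ => 4 * (Real.cos ((n+1 : ℕ) * θ) * Real.cos ((n+1 : ℕ) * θ))) volume 0 π :=
      (continuous_const.mul (c1.mul c1)).intervalIntegrable _ _
    have h2 : IntervalIntegrable
        (fun θ : ℝ => 4 * (Real.cos ((n+1 : ℕ) * θ) * chebQ n (Real.cos θ))) volume 0 π :=
      (continuous_const.mul (c1.mul cq)).intervalIntegrable _ _
    have h3 : IntervalIntegrable (fun θ : ℝ => (chebQ n (Real.cos θ)) ^ 2) volume 0 π :=
      (cq.pow 2).intervalIntegrable _ _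
    rw [intervalIntegral.integral_add (h1.sub h2) h3, intervalIntegral.integral_sub h1 h2,
      intervalIntegral.integral_const_mul, intervalIntegral.integral_const_mul,
      integral_cos_nat_mul_cos (n+1) (n+1) (by omega) (by omega), if_pos rfl,
      integral_cos_mul_chebQ n (n+1) (by omega), integral_chebQ_sq n]
    push_cast
    ring

theorem chebyshevT_filter_integral (n : ℕ) (hn : 1 ≤ n) :
    ∫ x in (-1 : ℝ)..1, ((chebT n x - chebT n 0) / x) ^ 2 * (1 - x ^ 2) ^ (-(1 / 2) : ℝ)
      = π * n := by
  set g : ℝ → ℝ := fun x =>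
    ((chebT n x - chebT n 0) / x) ^ 2 * (1 - x ^ 2) ^ (-(1 / 2) : ℝ) with hg
  have himg : Real.cos '' Set.Ioo 0 π = Set.Ioo (-1 : ℝ) 1 := by
    ext y
    constructor
    · rintro ⟨θ, ⟨h0, hπ⟩, rfl⟩
      constructor
      · have := Real.strictAntiOn_cos ⟨h0.le, hπ.le⟩ ⟨by linarith [Real.pi_pos], le_refl π⟩ hπ
        simpa [Real.cos_pi] using this
      · have := Real.strictAntiOn_cos ⟨le_refl (0:ℝ), Real.pi_pos.le⟩ ⟨h0.le, hπ.le⟩ h0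
        simpa [Real.cos_zero] using this
    · rintro ⟨hy1, hy2⟩
      refine ⟨Real.arccos y, ⟨Real.arccos_pos.mpr hy2, ?_⟩, Real.cos_arccos hy1.le hy2.le⟩
      exact lt_of_le_of_ne (Real.arccos_le_pi y)
        (fun h => absurd (Real.arccos_eq_pi.mp h) (by linarith))
  have hderiv : ∀ θ ∈ Set.Ioo (0:ℝ) π,
      HasDerivWithinAt Real.cos (-Real.sin θ) (Set.Ioo 0 π) θ :=
    fun θ _ => (Real.hasDerivAt_cos θ).hasDerivWithinAt
  have hinj : Set.InjOn Real.cos (Set.Ioo 0 π) :=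
    Real.injOn_cos.mono Set.Ioo_subset_Icc_self
  have key := integral_image_eq_integral_abs_deriv_smul measurableSet_Ioo hderiv hinj g
  rw [himg] at key
  have hae : ∀ᵐ (θ : ℝ), θ ≠ π / 2 := compl_mem_ae_iff.mpr (measure_singleton _)
  have hcong : ∫ θ in Set.Ioo (0:ℝ) π, |(-Real.sin θ)| • g (Real.cos θ)
      = ∫ θ in Set.Ioo (0:ℝ) π, (chebQ n (Real.cos θ)) ^ 2 := by
    refine setIntegral_congr_ae measurableSet_Ioo ?_
    filter_upwards [hae] with θ hθ hmem
    obtain ⟨h0, hπ⟩ := hmem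
    have hsin : 0 < Real.sin θ := Real.sin_pos_of_pos_of_lt_pi h0 hπ
    have hcosne : Real.cos θ ≠ 0 := by
      intro hc
      exact hθ (Real.injOn_cos ⟨h0.le, hπ.le⟩
        ⟨by positivity, by linarith [Real.pi_pos]⟩ (by rw [hc, Real.cos_pi_div_two]))
    have hw : (1 - Real.cos θ ^ 2) ^ (-(1 / 2) : ℝ) = (Real.sin θ)⁻¹ := by
      rw [← Real.sin_sq, ← Real.rpow_natCast (Real.sin θ) 2, ← Real.rpow_mul hsin.le]
      norm_num [Real.rpow_neg_one]
    have hfac : chebT n (Real.cos θ) - chebT n 0 = Real.cos θ * chebQ n (Real.cos θ) :=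
      chebT_sub_factor n (Real.cos θ)
    rw [smul_eq_mul, hg]
    simp only [hfac, hw]
    rw [abs_neg, abs_of_pos hsin]
    field_simp
  rw [intervalIntegral.integral_of_le (by norm_num : (-1:ℝ) ≤ 1),
    MeasureTheory.integral_Ioc_eq_integral_Ioo]
  calc ∫ x in Set.Ioo (-1:ℝ) 1, g x
      = ∫ θ in Set.Ioo (0:ℝ) π, (chebQ n (Real.cos θ)) ^ 2 := by rw [key, hcong]
    _ = ∫ θ in (0:ℝ)..π, (chebQ n (Real.cos θ)) ^ 2 := by
        rw [intervalIntegral.integral_of_le Real.pi_pos.le,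
          MeasureTheory.integral_Ioc_eq_integral_Ioo]
    _ = π * n := integral_chebQ_sq n
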